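/- The function g(b) = 2b³ − (4/3)b + (b⁴ − b²)·ln((1−b)/(1+b)) has a unique zero b_c in the open interval (0,1); moreover g(b) < 0 for all b ∈ (0, b_c) and g(b) > 0 for all b ∈ (b_c, 1). -/

import Mathlib

/-!
On `(0,1)` we have `g(b) = b²(1 - b²) φ(b)` with
`φ(b) = log(1 + b) - log(1 - b) + (1/(1 - b) - 1/(1 + b))/3 - 4/(3b)`,
a sum of strictly increasing functions. Since `φ(1/2) < 0 < φ(9/10)`, `φ` has exactly one zero
`b_c` in `(0,1)`, with `φ < 0` before it and `φ > 0` after it, and the positive factor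
`b²(1 - b²)` transfers all of this to `g`.
-/

noncomputable section

/-- g(b) = 2b³ − (4/3)b + (b⁴ − b²) ln((1−b)/(1+b)). -/
def gfun (b : ℝ) : ℝ := 2*b^3 - (4/3)*b + (b^4 - b^2) * Real.log ((1-b)/(1+b))

open Set Real

/-- `gfun b / (b ^ 2 * (1 - b ^ 2))`, with the rational part split into partial fractions. -/
def gfunReduced (b : ℝ) : ℝ :=
  log (1 + b) - log (1 - b) + (1 / (1 - b) - 1 / (1 + b)) / 3 - 4 / (3 * b)

lemma gfun_eq_mul_gfunReduced {b : ℝ} (hb : b ∈ Ioo (0 : ℝ) 1) :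
    gfun b = b ^ 2 * (1 - b ^ 2) * gfunReduced b := by
  obtain ⟨hb0, hb1⟩ := hb
  have h1 : 1 - b ≠ 0 := by linarith
  have h2 : 1 + b ≠ 0 := by linarith
  rw [gfun, gfunReduced, log_div h1 h2]
  field_simp
  ring

lemma strictMonoOn_gfunReduced : StrictMonoOn gfunReduced (Ioo 0 1) := by
  rintro x ⟨hx0, hx1⟩ y ⟨hy0, hy1⟩ hxy
  have h1 : log (1 + x) < log (1 + y) := log_lt_log (by linarith) (by linarith)
  have h2 : log (1 - y) < log (1 - x) := log_lt_log (by linarith) (by linarith)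
  have h3 : 1 / (1 - x) < 1 / (1 - y) := one_div_lt_one_div_of_lt (by linarith) (by linarith)
  have h4 : 1 / (1 + y) < 1 / (1 + x) := one_div_lt_one_div_of_lt (by linarith) (by linarith)
  have h5 : 4 / (3 * y) < 4 / (3 * x) :=
    div_lt_div_of_pos_left (by norm_num) (by linarith) (by linarith)
  simp only [gfunReduced]
  linarith

lemma continuousOn_gfunReduced : ContinuousOn gfunReduced (Ioo 0 1) := by
  rintro x ⟨hx0, hx1⟩
  have : 1 - x ≠ 0 := by linarith
  have : 1 + x ≠ 0 := by linarith
  have : 3 * x ≠ 0 := by positivity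
  unfold gfunReduced
  exact ContinuousAt.continuousWithinAt (by fun_prop (disch := assumption))

lemma gfunReduced_half_neg : gfunReduced (1 / 2) < 0 := by
  have h1 : log (1 + 1 / 2) ≤ 1 / 2 := by
    linarith [log_le_sub_one_of_pos (x := 1 + 1 / 2) (by norm_num)]
  have h2 : -1 ≤ log (1 - 1 / 2) := by
    have := one_sub_inv_le_log_of_pos (x := 1 - 1 / 2) (by norm_num)
    norm_num at this ⊢
    linarith
  simp only [gfunReduced]
  norm_num
  linarith

lemma gfunReduced_nine_tenths_pos : 0 < gfunReduced (9 / 10) := by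
  have h1 : 0 < log (1 + 9 / 10) := log_pos (by norm_num)
  have h2 : log (1 - 9 / 10) < 0 := log_neg (by norm_num) (by norm_num)
  simp only [gfunReduced]
  norm_num at h1 h2 ⊢
  linarith

/-- **Existence, uniqueness and sign of the critical zero b_c (Remark `rem_PV`).**
g has a unique zero b_c in (0,1); g < 0 on (0,b_c) and g > 0 on (b_c,1). -/
theorem gfun_unique_zero :
    ∃ bc ∈ Set.Ioo (0:ℝ) 1,
      gfun bc = 0 ∧
      (∀ b ∈ Set.Ioo (0:ℝ) 1, gfun b = 0 → b = bc) ∧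
      (∀ b : ℝ, 0 < b → b < bc → gfun b < 0) ∧
      (∀ b : ℝ, bc < b → b < 1 → 0 < gfun b) := by
  obtain ⟨bc, hbc, hzero⟩ : ∃ bc ∈ Ioo (0 : ℝ) 1, gfunReduced bc = 0 :=
    isPreconnected_Ioo.intermediate_value (by norm_num) (by norm_num) continuousOn_gfunReduced
      ⟨gfunReduced_half_neg.le, gfunReduced_nine_tenths_pos.le⟩
  have weight_pos : ∀ b ∈ Ioo (0 : ℝ) 1, 0 < b ^ 2 * (1 - b ^ 2) := fun b ⟨hb0, hb1⟩ =>
    mul_pos (by positivity) (by nlinarith)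
  refine ⟨bc, hbc, by rw [gfun_eq_mul_gfunReduced hbc, hzero, mul_zero], ?_, ?_, ?_⟩
  · intro b hb hgb
    rw [gfun_eq_mul_gfunReduced hb, mul_eq_zero] at hgb
    have hb_zero := hgb.resolve_left (weight_pos b hb).ne'
    exact strictMonoOn_gfunReduced.injOn hb hbc (hb_zero.trans hzero.symm)
  · intro b hb0 hbc_lt
    have hb : b ∈ Ioo (0 : ℝ) 1 := ⟨hb0, hbc_lt.trans hbc.2⟩
    rw [gfun_eq_mul_gfunReduced hb]
    exact mul_neg_of_pos_of_neg (weight_pos b hb) (hzero ▸ strictMonoOn_gfunReduced hb hbc hbc_lt)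
  · intro b hbc_lt hb1
    have hb : b ∈ Ioo (0 : ℝ) 1 := ⟨hbc.1.trans hbc_lt, hb1⟩
    rw [gfun_eq_mul_gfunReduced hb]
    exact mul_pos (weight_pos b hb) (hzero ▸ strictMonoOn_gfunReduced hbc hb hbc_lt)
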